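/- Let m and n be nonzero integers and let D = [[m, 0], [0, mn]]. For every regular language L ⊆ Σ* there exists a regular language L' ⊆ Σ* such that φ(L') = {B ∈ GL(2,ℤ) : there exists w ∈ L with φ(w) ∈ H(n) and φ(w)·D = D·B}. In other words, for any regular subset 𝒮 ⊆ GL(2,ℤ), the set of D-conjugates {D⁻¹AD : A ∈ 𝒮 ∩ H(n)} is a regular subset of GL(2,ℤ). -/

import Mathlib

/-- 2×2 integer matrices. -/
abbrev M2 := Matrix (Fin 2) (Fin 2) ℤ

/-- A matrix belongs to GL(2,ℤ), i.e. has determinant ±1. -/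
def IsGL (A : M2) : Prop := A.det = 1 ∨ A.det = -1

/-- The four-letter alphabet Σ = {X, N, S, R}. -/
inductive Alph : Type | X | N | S | R
deriving DecidableEq

instance : Fintype Alph :=
  ⟨{Alph.X, Alph.N, Alph.S, Alph.R}, fun x => by cases x <;> simp⟩

/-- The matrices assigned to letters of Σ. -/
def phiLetter : Alph → M2
  | Alph.X => !![-1, 0; 0, -1]
  | Alph.N => !![1, 0; 0, -1]
  | Alph.S => !![0, -1; 1, 0]
  | Alph.R => !![0, -1; 1, 1]

/-- The monoid homomorphism φ : Σ* → GL(2,ℤ) (valued in matrices). -/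
def phi (w : List Alph) : M2 := (w.map phiLetter).prod

/-- A word over Σ is canonical: no subword SS or RRR, the letter N occurs only in
the first position, and X occurs only in the first position or immediately after N. -/
def Canonical (w : List Alph) : Prop :=
  ¬ [Alph.S, Alph.S] <:+: w ∧
  ¬ [Alph.R, Alph.R, Alph.R] <:+: w ∧
  (∀ i : Fin w.length, w.get i = Alph.N → (i : ℕ) = 0) ∧
  (∀ i : Fin w.length, w.get i = Alph.X →
      (i : ℕ) = 0 ∨ ((i : ℕ) = 1 ∧ w.get ⟨0, Nat.lt_of_le_of_lt (Nat.zero_le _) i.isLt⟩ = Alph.N))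

/-- A subset of GL(2,ℤ) is regular if it is the image under φ of a regular language. -/
def RegularSubset (S : Set M2) : Prop :=
  ∃ L : Language Alph, L.IsRegular ∧ phi '' L = S

/-!
Schreier rewriting. A finite automaton tracks the coset `π(w)⁻¹ H` of the prefix `w` read so
far, and a transversal `rep` of the cosets is fixed with `rep H = 1`. Reading `a` in the coset
`q` contributes the element `rep(q)⁻¹ g(a) rep(g(a)⁻¹ q)` of `H`; along a word these telescope
to `rep(H)⁻¹ π(w) rep(π(w)⁻¹ H)`, which is `π(w)` when `π(w) ∈ H`. Writing, for each letter, a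
word for the `ψ`-image of its contribution is a sequential transduction, and regular languages
are closed under these: an ε-NFA runs the transducer and reads its output from a buffer.

Here `H = H(n)`, which contains the kernel of reduction mod `n` and so has finite index, and
`ψ` is conjugation by `diag(1, n)`, which agrees with conjugation by `D = m • diag(1, n)`;
every matrix of GL(2,ℤ) is some `φ(v)` because `S` and `T` generate SL(2,ℤ).
-/

theorem List.reduceOption_map_some {β : Type*} (t : List β) :
    (t.map some).reduceOption = t := by
  simp [List.reduceOption]

namespace DFA

variable {α β σ σ₀ : Type*} (M : DFA α σ) (out : σ → α → List β)

def outputFrom : σ → List α → List β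
  | _, [] => []
  | s, a :: w => out s a ++ outputFrom (M.step s a) w

@[simp]
theorem outputFrom_nil (s : σ) : M.outputFrom out s [] = [] := rfl

@[simp]
theorem outputFrom_cons (s : σ) (a : α) (w : List α) :
    M.outputFrom out s (a :: w) = out s a ++ M.outputFrom out (M.step s a) w := rfl

def outputSuffixes : Set (List β) := {t | t = [] ∨ ∃ s a, t <:+ out s a}

theorem finite_outputSuffixes [Finite σ] [Finite α] : (outputSuffixes out).Finite := by
  refine ((Set.finite_iUnion fun p : σ × α => (out p.1 p.2).tails.finite_toSet).insert
    []).subset ?_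
  rintro t (rfl | ⟨s, a, h⟩)
  · exact Set.mem_insert _ _
  · exact Set.mem_insert_of_mem _ (Set.mem_iUnion.2 ⟨(s, a), (List.mem_tails _ _).2 h⟩)

/-- Simulates `M₀` and the transducer `(M, out)` side by side; the third component of a state
is the part of the last output word that has not been read yet. -/
def transductionεNFA (M₀ : DFA α σ₀) : εNFA β (σ₀ × σ × outputSuffixes out) where
  step x
    | none => {y | x.2.2.1 = [] ∧ ∃ a, y.1 = M₀.step x.1 a ∧ y.2.1 = M.step x.2.1 a ∧
        y.2.2.1 = out x.2.1 a}
    | some b => {y | y.1 = x.1 ∧ y.2.1 = x.2.1 ∧ x.2.2.1 = b :: y.2.2.1}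
  start := {y | y.1 = M₀.start ∧ y.2.1 = M.start ∧ y.2.2.1 = []}
  accept := {y | y.1 ∈ M₀.accept ∧ y.2.2.1 = []}

variable {M out} {M₀ : DFA α σ₀}

theorem nil_mem_outputSuffixes : [] ∈ outputSuffixes out := Or.inl rfl

theorem mem_outputSuffixes_of_cons {b : β} {t : List β} (h : b :: t ∈ outputSuffixes out) :
    t ∈ outputSuffixes out := by
  rcases h with h | ⟨s, a, h⟩
  · cases h
  · exact Or.inr ⟨s, a, (List.suffix_cons b t).trans h⟩

theorem isPath_transductionεNFA_flush (s₀ : σ₀) (s : σ) :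
    ∀ (t : List β) (ht : t ∈ outputSuffixes out),
      (M.transductionεNFA out M₀).IsPath (s₀, s, ⟨t, ht⟩)
        (s₀, s, ⟨[], nil_mem_outputSuffixes⟩) (t.map some)
  | [], _ => .nil _
  | _ :: t, ht => .cons (s₀, s, ⟨t, mem_outputSuffixes_of_cons ht⟩) _ _ _ _
      ⟨rfl, rfl, rfl⟩ (isPath_transductionεNFA_flush s₀ s t _)

theorem isPath_transductionεNFA_run :
    ∀ (w : List α) (s₀ : σ₀) (s : σ), ∃ x : List (Option β),
      x.reduceOption = M.outputFrom out s w ∧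
      (M.transductionεNFA out M₀).IsPath (s₀, s, ⟨[], nil_mem_outputSuffixes⟩)
        (M₀.evalFrom s₀ w, M.evalFrom s w, ⟨[], nil_mem_outputSuffixes⟩) x
  | [], s₀, s => ⟨[], rfl, .nil _⟩
  | a :: w, s₀, s => by
    obtain ⟨x, hx, hpath⟩ := isPath_transductionεNFA_run w (M₀.step s₀ a) (M.step s a)
    have hout : out s a ∈ outputSuffixes out := Or.inr ⟨s, a, List.suffix_refl _⟩
    refine ⟨none :: ((out s a).map some ++ x), ?_,
      .cons (M₀.step s₀ a, M.step s a, ⟨out s a, hout⟩) _ _ _ _ ?_ ?_⟩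
    · simp [List.reduceOption_append, hx, List.reduceOption_map_some]
    · exact ⟨rfl, a, rfl, rfl, rfl⟩
    · exact (εNFA.isPath_append _).2 ⟨_, isPath_transductionεNFA_flush _ _ _ hout, hpath⟩

theorem exists_of_isPath_transductionεNFA {x y : σ₀ × σ × outputSuffixes out}
    {p : List (Option β)} (hp : (M.transductionεNFA out M₀).IsPath x y p) (hy : y.2.2.1 = []) :
    ∃ w, M₀.evalFrom x.1 w = y.1 ∧ p.reduceOption = x.2.2.1 ++ M.outputFrom out x.2.1 w := by
  induction hp with
  | nil x => exact ⟨[], rfl, by simp [hy]⟩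
  | cons y x z b p hstep _ ih =>
    obtain ⟨w, hw, hp⟩ := ih hy
    cases b with
    | none =>
      obtain ⟨hx, a, h₀, h, ho⟩ := hstep
      refine ⟨a :: w, by rw [DFA.evalFrom_cons, ← h₀, hw], ?_⟩
      simp [hp, hx, ho, h]
    | some b =>
      obtain ⟨h₀, h, hx⟩ := hstep
      refine ⟨w, by rw [← h₀, hw], ?_⟩
      simp [hp, hx, h]

theorem accepts_transductionεNFA :
    (M.transductionεNFA out M₀).accepts = M.outputFrom out M.start '' M₀.accepts := by
  ext v
  rw [εNFA.mem_accepts_iff_exists_path]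
  constructor
  · rintro ⟨x, y, p, ⟨hx₀, hx, hxt⟩, ⟨hy₀, hyt⟩, rfl, hp⟩
    obtain ⟨w, hw, hpw⟩ := exists_of_isPath_transductionεNFA hp hyt
    refine ⟨w, show M₀.evalFrom M₀.start w ∈ M₀.accept from hx₀ ▸ hw ▸ hy₀, ?_⟩
    rw [hpw, hxt, hx, List.nil_append]
  · rintro ⟨w, hw, rfl⟩
    obtain ⟨p, hp, hpath⟩ :=
      isPath_transductionεNFA_run (M := M) (out := out) w M₀.start M.start
    exact ⟨_, _, p, ⟨rfl, rfl, rfl⟩,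
      ⟨show M₀.evalFrom M₀.start w ∈ M₀.accept from hw, rfl⟩, hp, hpath⟩

end DFA

theorem Language.IsRegular.image_outputFrom {α β σ : Type*} [Finite α] [Finite σ]
    (M : DFA α σ) (out : σ → α → List β) {L : Language α} (hL : L.IsRegular) :
    Language.IsRegular (M.outputFrom out M.start '' L : Language β) := by
  obtain ⟨σ₀, _, M₀, rfl⟩ := hL
  have := (DFA.finite_outputSuffixes out).to_subtype
  exact Language.isRegular_iff.2 ⟨_, Fintype.ofFinite _,
    (M.transductionεNFA out M₀).toNFA.toDFA,
    by rw [NFA.toDFA_correct, εNFA.toNFA_correct, DFA.accepts_transductionεNFA]⟩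

section Schreier

variable {α G : Type*} [Group G] (H : Subgroup G) (g : α → G)

def cosetDFA : DFA α (G ⧸ H) where
  step q a := (g a)⁻¹ • q
  start := ((1 : G) : G ⧸ H)
  accept := {((1 : G) : G ⧸ H)}

@[simp]
theorem cosetDFA_start : (cosetDFA H g).start = ((1 : G) : G ⧸ H) := rfl

@[simp]
theorem cosetDFA_step (q : G ⧸ H) (a : α) : (cosetDFA H g).step q a = (g a)⁻¹ • q := rfl

theorem cosetDFA_evalFrom (q : G ⧸ H) (w : List α) :
    (cosetDFA H g).evalFrom q w = (w.map g).prod⁻¹ • q := by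
  induction w generalizing q with
  | nil => simp
  | cons a w ih => simp [DFA.evalFrom_cons, ih, mul_smul]

theorem cosetDFA_evalFrom_one_eq_one_iff {w : List α} :
    (cosetDFA H g).evalFrom ((1 : G) : G ⧸ H) w = ((1 : G) : G ⧸ H) ↔
      (w.map g).prod ∈ H := by
  rw [cosetDFA_evalFrom, MulAction.Quotient.smul_coe, smul_eq_mul, mul_one, QuotientGroup.eq,
    inv_inv, mul_one]

theorem cosetDFA_accepts : (cosetDFA H g).accepts = {w | (w.map g).prod ∈ H} :=
  Set.ext fun _ => cosetDFA_evalFrom_one_eq_one_iff H g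

open Classical in
noncomputable def cosetRep (q : G ⧸ H) : G := if q = ((1 : G) : G ⧸ H) then 1 else q.out

theorem cosetRep_one : cosetRep H ((1 : G) : G ⧸ H) = 1 := if_pos rfl

theorem coe_cosetRep (q : G ⧸ H) : ((cosetRep H q : G) : G ⧸ H) = q := by
  unfold cosetRep
  split_ifs with h
  · exact h.symm
  · exact QuotientGroup.out_eq' q

theorem cosetRep_inv_mul_prod_mul_mem (q : G ⧸ H) (w : List α) :
    (cosetRep H q)⁻¹ * (w.map g).prod * cosetRep H ((cosetDFA H g).evalFrom q w) ∈ H := by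
  have h : (((w.map g).prod⁻¹ * cosetRep H q : G) : G ⧸ H) =
      cosetRep H ((cosetDFA H g).evalFrom q w) := by
    rw [coe_cosetRep, cosetDFA_evalFrom, ← smul_eq_mul, ← MulAction.Quotient.smul_coe,
      coe_cosetRep]
  simpa [mul_assoc] using QuotientGroup.eq.mp h

noncomputable def schreierElem (q : G ⧸ H) (w : List α) : H :=
  ⟨_, cosetRep_inv_mul_prod_mul_mem H g q w⟩

@[simp]
theorem schreierElem_nil (q : G ⧸ H) : schreierElem H g q [] = 1 := by
  ext
  simp [schreierElem]

theorem schreierElem_cons (q : G ⧸ H) (a : α) (w : List α) :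
    schreierElem H g q (a :: w) =
      schreierElem H g q [a] * schreierElem H g ((cosetDFA H g).step q a) w := by
  ext
  simp [schreierElem, mul_assoc]

theorem schreierElem_one_of_mem {w : List α} (hw : (w.map g).prod ∈ H) :
    schreierElem H g ((1 : G) : G ⧸ H) w = ⟨_, hw⟩ := by
  ext
  simp [schreierElem, (cosetDFA_evalFrom_one_eq_one_iff H g).2 hw, cosetRep_one]

variable {β K : Type*} [Group K] {H} (ψ : H →* K) {r : β → K}
  (hr : Function.Surjective fun v : List β => (v.map r).prod)

noncomputable def schreierOutput (q : G ⧸ H) (a : α) : List β :=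
  Function.surjInv hr (ψ (schreierElem H g q [a]))

theorem prod_map_outputFrom_schreierOutput (q : G ⧸ H) (w : List α) :
    (((cosetDFA H g).outputFrom (schreierOutput g ψ hr) q w).map r).prod =
      ψ (schreierElem H g q w) := by
  induction w generalizing q with
  | nil => simp
  | cons a w ih =>
    rw [DFA.outputFrom_cons, List.map_append, List.prod_append, ih, schreierElem_cons, map_mul,
      schreierOutput, Function.surjInv_eq hr]

end Schreier

theorem Language.IsRegular.exists_image_eq_subgroupHom {α β G K : Type*} [Finite α] [Group G]
    [Group K] {H : Subgroup G} [H.FiniteIndex] (g : α → G) (ψ : H →* K) {r : β → K}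
    (hr : Function.Surjective fun v : List β => (v.map r).prod) {L : Language α}
    (hL : L.IsRegular) :
    ∃ L' : Language β, L'.IsRegular ∧ (fun v => (v.map r).prod) '' L' =
      {k | ∃ w ∈ L, ∃ hw : (w.map g).prod ∈ H, ψ ⟨_, hw⟩ = k} := by
  have hH : (L ⊓ (cosetDFA H g).accepts).IsRegular :=
    hL.inf (Language.isRegular_iff.2 ⟨_, Fintype.ofFinite _, _, rfl⟩)
  refine ⟨_, hH.image_outputFrom (cosetDFA H g) (schreierOutput g ψ hr), ?_⟩
  ext k
  simp only [Set.mem_image, Set.mem_ofPred_eq]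
  constructor
  · rintro ⟨_, ⟨w, ⟨hwL, hwH⟩, rfl⟩, rfl⟩
    rw [cosetDFA_accepts] at hwH
    exact ⟨w, hwL, hwH, by
      rw [prod_map_outputFrom_schreierOutput, cosetDFA_start, schreierElem_one_of_mem]⟩
  · rintro ⟨w, hwL, hwH, rfl⟩
    refine ⟨_, ⟨w, ⟨hwL, by rwa [cosetDFA_accepts]⟩, rfl⟩, ?_⟩
    rw [prod_map_outputFrom_schreierOutput, cosetDFA_start, schreierElem_one_of_mem]

theorem phi_cons (a : Alph) (w : List Alph) : phi (a :: w) = phiLetter a * phi w :=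
  List.prod_cons

theorem phi_append (u v : List Alph) : phi (u ++ v) = phi u * phi v := by
  simp [phi]

theorem exists_phi_eq_of_det_eq_one {A : M2} (hA : A.det = 1) : ∃ w, phi w = A := by
  suffices ∀ B : FixedDetMatrix (Fin 2) ℤ 1, ∃ w, phi w = B.1 from this ⟨A, hA⟩
  intro B
  induction B using FixedDetMatrices.induction_on one_ne_zero with
  | h0 B hc ha _ hb => exact ⟨[], by rw [FixedDetMatrices.reps_one_id B hc ha hb]; rfl⟩
  | hS B ih =>
    obtain ⟨w, hw⟩ := ih
    refine ⟨Alph.S :: w, ?_⟩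
    rw [phi_cons, hw, FixedDetMatrices.smul_coe, ModularGroup.coe_S]
    rfl
  | hT B ih =>
    obtain ⟨w, hw⟩ := ih
    refine ⟨[Alph.X, Alph.S, Alph.R] ++ w, ?_⟩
    rw [phi_append, hw, FixedDetMatrices.smul_coe, ModularGroup.coe_T]
    congr 1
    simp [phi, phiLetter]

theorem exists_phi_eq {A : M2} (hA : IsUnit A.det) : ∃ w, phi w = A := by
  rcases Int.isUnit_iff.1 hA with h | h
  · exact exists_phi_eq_of_det_eq_one h
  · have hN : phiLetter Alph.N * phiLetter Alph.N = 1 := by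
      simp [phiLetter, Matrix.one_fin_two]
    obtain ⟨w, hw⟩ := exists_phi_eq_of_det_eq_one (A := phiLetter Alph.N * A)
      (by rw [Matrix.det_mul, h]; simp [phiLetter, Matrix.det_fin_two_of])
    exact ⟨Alph.N :: w, by rw [phi_cons, hw, ← mul_assoc, hN, one_mul]⟩

theorem isUnit_det_phiLetter (a : Alph) : IsUnit (phiLetter a).det := by
  cases a <;> simp [phiLetter, Matrix.det_fin_two_of]

noncomputable def letterGL (a : Alph) : GL (Fin 2) ℤ :=
  Matrix.nonsingInvUnit (phiLetter a) (isUnit_det_phiLetter a)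

theorem coe_prod_map_letterGL (w : List Alph) :
    (((w.map letterGL).prod : GL (Fin 2) ℤ) : M2) = phi w := by
  rw [← Units.coeHom_apply, map_list_prod, List.map_map]
  rfl

theorem surjective_prod_map_letterGL :
    Function.Surjective fun w : List Alph => (w.map letterGL).prod := by
  intro A
  obtain ⟨w, hw⟩ := exists_phi_eq (Matrix.isUnits_det_units A)
  exact ⟨w, Units.ext (by rw [coe_prod_map_letterGL, hw])⟩

section DiagConj

variable {n : ℤ} {A B : M2}

/-- `D⁻¹ A D` for `D = !![1, 0; 0, n]`, which has integer entries when `n ∣ A 1 0`. -/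
def diagConj (n : ℤ) (A : M2) : M2 := !![A 0 0, A 0 1 * n; A 1 0 / n, A 1 1]

theorem mul_diag_eq_diag_mul_diagConj (hA : n ∣ A 1 0) :
    A * !![1, 0; 0, n] = !![1, 0; 0, n] * diagConj n A := by
  rw [diagConj, Matrix.eta_fin_two A, Matrix.mul_fin_two, Matrix.mul_fin_two]
  simp [Int.mul_ediv_cancel' hA, mul_comm]

theorem diag_mul_left_cancel (hn : n ≠ 0) {X Y : M2}
    (h : !![1, 0; 0, n] * X = !![1, 0; 0, n] * Y) : X = Y := by
  ext i j
  have h' := congr_fun₂ h i j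
  fin_cases i <;> simp [Matrix.mul_apply, Fin.sum_univ_two] at h' ⊢
  · exact h'
  · exact h'.resolve_right hn

theorem diagConj_one : diagConj n 1 = 1 := by
  simp [diagConj, Matrix.one_fin_two]

theorem dvd_mul_apply_one_zero (hA : n ∣ A 1 0) (hB : n ∣ B 1 0) : n ∣ (A * B) 1 0 := by
  rw [Matrix.mul_apply, Fin.sum_univ_two]
  exact dvd_add (hA.mul_right _) (hB.mul_left _)

theorem diagConj_mul (hn : n ≠ 0) (hA : n ∣ A 1 0) (hB : n ∣ B 1 0) :
    diagConj n (A * B) = diagConj n A * diagConj n B := by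
  apply diag_mul_left_cancel hn
  rw [← mul_diag_eq_diag_mul_diagConj (dvd_mul_apply_one_zero hA hB), ← mul_assoc,
    ← mul_diag_eq_diag_mul_diagConj hA, mul_assoc, mul_diag_eq_diag_mul_diagConj hB, mul_assoc]

end DiagConj

def gamma0 (n : ℤ) : Subgroup (GL (Fin 2) ℤ) where
  carrier := {A | n ∣ (A : M2) 1 0}
  mul_mem' hA hB := dvd_mul_apply_one_zero hA hB
  one_mem' := by simp
  inv_mem' hA := by simpa [Matrix.coe_units_inv, Matrix.inv_def, Matrix.adjugate_fin_two] using hA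

theorem mem_gamma0 {n : ℤ} {A : GL (Fin 2) ℤ} : A ∈ gamma0 n ↔ n ∣ (A : M2) 1 0 := Iff.rfl

theorem gamma0_finiteIndex {n : ℤ} (hn : n ≠ 0) : (gamma0 n).FiniteIndex := by
  have : NeZero n.natAbs := ⟨Int.natAbs_ne_zero.2 hn⟩
  let f := Matrix.GeneralLinearGroup.map (n := Fin 2) (Int.castRingHom (ZMod n.natAbs))
  refine Subgroup.finiteIndex_of_le (H := f.ker) fun A hA => ?_
  have h := congr_arg (fun B : GL (Fin 2) (ZMod n.natAbs) =>
    (B : Matrix (Fin 2) (Fin 2) (ZMod n.natAbs)) 1 0) hA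
  simp only [f, Matrix.GeneralLinearGroup.map_apply, Units.val_one,
    Matrix.one_apply_ne (show (1 : Fin 2) ≠ 0 by decide)] at h
  exact Int.natAbs_dvd.1 ((ZMod.intCast_zmod_eq_zero_iff_dvd _ _).1 h)

noncomputable def diagConjHom {n : ℤ} (hn : n ≠ 0) : gamma0 n →* GL (Fin 2) ℤ :=
  MonoidHom.toHomUnits
    { toFun A := diagConj n ((A : GL (Fin 2) ℤ) : M2)
      map_one' := diagConj_one
      map_mul' A B := diagConj_mul hn A.2 B.2 }

@[simp]
theorem coe_diagConjHom {n : ℤ} (hn : n ≠ 0) (A : gamma0 n) :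
    ((diagConjHom hn A : GL (Fin 2) ℤ) : M2) = diagConj n ((A : GL (Fin 2) ℤ) : M2) := rfl

theorem isGL_iff_isUnit_det {A : M2} : IsGL A ↔ IsUnit A.det := Int.isUnit_iff.symm

theorem mul_diag_eq_diag_mul_iff {m n : ℤ} {A B : M2} (hm : m ≠ 0) (hn : n ≠ 0)
    (hA : n ∣ A 1 0) :
    A * !![m, 0; 0, m * n] = !![m, 0; 0, m * n] * B ↔ diagConj n A = B := by
  have hD : !![m, 0; 0, m * n] = m • !![1, 0; 0, n] := by
    ext i j
    fin_cases i <;> fin_cases j <;> simp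
  rw [hD, Matrix.mul_smul, Matrix.smul_mul, (smul_right_injective M2 hm).eq_iff,
    mul_diag_eq_diag_mul_diagConj hA]
  exact ⟨diag_mul_left_cancel hn, fun h => h ▸ rfl⟩

/-- For `D = [[m,0],[0,mn]]` and a regular language `L`, there is a regular language `L'`
whose image under φ is the set of `B ∈ GL(2,ℤ)` such that `φ(w)·D = D·B` for some `w ∈ L`
with `φ(w) ∈ H(n)`. -/
theorem conjugates_regular (m n : ℤ) (hm : m ≠ 0) (hn : n ≠ 0)
    (L : Language Alph) (hL : L.IsRegular) :
    ∃ L' : Language Alph, L'.IsRegular ∧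
      phi '' L' = {B : M2 | IsGL B ∧ ∃ w ∈ L, n ∣ phi w 1 0 ∧
        phi w * !![m, 0; 0, m * n] = !![m, 0; 0, m * n] * B} := by
  have := gamma0_finiteIndex hn
  obtain ⟨L', hL', hL'_image⟩ :=
    hL.exists_image_eq_subgroupHom letterGL (diagConjHom hn) surjective_prod_map_letterGL
  refine ⟨L', hL', ?_⟩
  have hphi : phi '' L' = Units.val '' ((fun w => (w.map letterGL).prod) '' L') :=
    (Set.image_congr fun w _ => (coe_prod_map_letterGL w).symm).trans
      (Set.image_image _ _ _).symm
  rw [hphi, hL'_image]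
  ext B
  constructor
  · rintro ⟨_, ⟨w, hwL, hw, rfl⟩, rfl⟩
    have hw' : n ∣ phi w 1 0 := by rwa [← coe_prod_map_letterGL, ← mem_gamma0]
    refine ⟨isGL_iff_isUnit_det.2 (Matrix.isUnits_det_units _), w, hwL, hw', ?_⟩
    rw [mul_diag_eq_diag_mul_iff hm hn hw', coe_diagConjHom, coe_prod_map_letterGL]
  · rintro ⟨-, w, hwL, hw, hB⟩
    have hw' : (w.map letterGL).prod ∈ gamma0 n := mem_gamma0.2 (by rwa [coe_prod_map_letterGL])
    refine ⟨_, ⟨w, hwL, hw', rfl⟩, ?_⟩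
    rw [coe_diagConjHom, coe_prod_map_letterGL, ← mul_diag_eq_diag_mul_iff hm hn hw, hB]
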